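/- Let x, y ∈ ℝ^c with 𝟙ᵀx = 𝟙ᵀy = 0. Then pretty good state transfer occurs between x and y under M (i.e., there exist γ ∈ ℂ with |γ| = 1 and a sequence of times t_k ∈ ℝ such that U_M(t_k)·x → γ·y as k → ∞) if and only if pretty good state transfer occurs between (x,0) and (y,0) under N. -/

import Mathlib

open Matrix

/-- The transition matrix `U_R(t) = exp(i·t·R)` of a real square matrix `R`,
as a complex matrix. -/
noncomputable def U {ι : Type*} [Fintype ι] [DecidableEq ι]
    (R : Matrix ι ι ℝ) (t : ℝ) : Matrix ι ι ℂ :=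
  NormedSpace.exp ((Complex.I * (t : ℂ)) • R.map (Complex.ofReal ·))

/-!
On vectors `(z, 0)` with `𝟙ᵀz = 0` the block matrix `N` acts as `α • 1 + M`: the block `Bᵀ`
kills `z` because all rows of `B` are equal, and `α • 1 + M` preserves `𝟙ᵀz = 0` because it is
symmetric with constant row sums. Hence `U_N(t) (z, 0) = e^{iαt} (U_M(t) z, 0)`. The phase
`e^{iαt}` does not matter for pretty good state transfer: along a subsequence of the times it
converges to a unimodular constant, which is absorbed into `γ`.
-/

open Filter Topology
open scoped Nat

-- Pretty good state transfer from `u` to `v` under `R` is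
-- `PrettyGoodTransfer (fun t => U R t *ᵥ u) v`.
def PrettyGoodTransfer {E : Type*} [TopologicalSpace E] [SMul ℂ E] (f : ℝ → E) (v : E) : Prop :=
  ∃ γ : ℂ, ‖γ‖ = 1 ∧ ∃ t : ℕ → ℝ, Tendsto (fun k => f (t k)) atTop (𝓝 (γ • v))

namespace PrettyGoodTransfer

variable {E F : Type*} [TopologicalSpace E] [AddCommGroup E] [Module ℂ E] [TopologicalSpace F]
  [AddCommGroup F] [Module ℂ F] {f : ℝ → E} {v : E}

theorem phase_smul [ContinuousSMul ℂ E] (h : PrettyGoodTransfer f v) {e : ℝ → ℂ}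
    (he : ∀ s, ‖e s‖ = 1) :
    PrettyGoodTransfer (fun s => e s • f s) v := by
  obtain ⟨γ, hγ, t, ht⟩ := h
  obtain ⟨a, ha, r, hr, hea⟩ := (isCompact_sphere (0 : ℂ) 1).tendsto_subseq
    (x := fun k => e (t k)) fun k => mem_sphere_zero_iff_norm.2 (he (t k))
  refine ⟨a * γ, by rw [norm_mul, mem_sphere_zero_iff_norm.1 ha, hγ, one_mul], t ∘ r, ?_⟩
  rw [mul_smul]
  exact hea.smul (ht.comp hr.tendsto_atTop)

theorem phase_smul_iff [ContinuousSMul ℂ E] {e : ℝ → ℂ} (he : ∀ s, ‖e s‖ = 1) :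
    PrettyGoodTransfer (fun s => e s • f s) v ↔ PrettyGoodTransfer f v := by
  refine ⟨fun h => ?_, fun h => h.phase_smul he⟩
  have he0 : ∀ s, e s ≠ 0 := fun s => norm_ne_zero_iff.1 ((he s).symm ▸ one_ne_zero)
  simpa only [inv_smul_smul₀ (he0 _)] using
    h.phase_smul (e := fun s => (e s)⁻¹) fun s => by rw [norm_inv, he, inv_one]

theorem map_iff (J : E →ₗ[ℂ] F) (hJ : Topology.IsInducing J) :
    PrettyGoodTransfer (fun s => J (f s)) (J v) ↔ PrettyGoodTransfer f v := by
  simp only [PrettyGoodTransfer, ← map_smul]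
  exact exists_congr fun γ => and_congr_right fun _ => exists_congr fun t =>
    (hJ.tendsto_nhds_iff (f := fun k => f (t k))).symm

end PrettyGoodTransfer

theorem Topology.isEmbedding_sumElim_zero {X ι κ : Type*} [TopologicalSpace X] [Zero X] :
    IsEmbedding (fun v : ι → X => Sum.elim v (0 : κ → X)) :=
  IsEmbedding.of_leftInverse (f := fun v i => v (Sum.inl i)) (fun _ => rfl)
    (continuous_pi fun _ => continuous_apply _)
    (continuous_pi fun j => j.rec (fun i => continuous_apply i) fun _ => continuous_const)

section Exp
variable {𝕂 : Type*} [RCLike 𝕂] {ι κ : Type*} [Fintype ι] [DecidableEq ι] [Fintype κ]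
  [DecidableEq κ]

attribute [local instance] Matrix.linftyOpNormedRing Matrix.linftyOpNormedAlgebra

theorem Matrix.hasSum_exp_mulVec (A : Matrix ι ι 𝕂) (v : ι → 𝕂) :
    HasSum (fun n => (n !⁻¹ : 𝕂) • (A ^ n *ᵥ v)) (NormedSpace.exp A *ᵥ v) := by
  have := (NormedSpace.exp_series_hasSum_exp' (𝕂 := 𝕂) A).map (mulVec.addMonoidHomLeft v)
    (continuous_id.matrix_mulVec continuous_const)
  simp only [← smul_mulVec]
  convert this using 1 <;> rfl

theorem Matrix.exp_mulVec_mulVec_of_mulVec_mulVec (A : Matrix κ κ 𝕂) (K : Matrix ι ι 𝕂)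
    (J : Matrix κ ι 𝕂) {S : Set (ι → 𝕂)} (hK : ∀ z ∈ S, K *ᵥ z ∈ S)
    (hAJ : ∀ z ∈ S, A *ᵥ (J *ᵥ z) = J *ᵥ (K *ᵥ z)) {z : ι → 𝕂} (hz : z ∈ S) :
    NormedSpace.exp A *ᵥ (J *ᵥ z) = J *ᵥ (NormedSpace.exp K *ᵥ z) := by
  have hpow : ∀ n, K ^ n *ᵥ z ∈ S ∧ A ^ n *ᵥ (J *ᵥ z) = J *ᵥ (K ^ n *ᵥ z) := by
    intro n
    induction n with
    | zero => simpa using hz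
    | succ n ih =>
      simp only [pow_succ', ← mulVec_mulVec, ih.2, hAJ _ ih.1]
      exact ⟨hK _ ih.1, trivial⟩
  refine (hasSum_exp_mulVec A (J *ᵥ z)).unique ?_
  have := (hasSum_exp_mulVec K z).map (mulVecLin J) (continuous_const.matrix_mulVec continuous_id)
  simpa only [Function.comp_def, mulVecLin_apply, mulVec_smul, (hpow _).2] using this

theorem Matrix.exp_smul_one_add (a : 𝕂) (X : Matrix ι ι 𝕂) :
    NormedSpace.exp (a • 1 + X) = NormedSpace.exp a • NormedSpace.exp X := by
  rw [Matrix.exp_add_of_commute _ _ ((Commute.one_left X).smul_left a), smul_one_eq_diagonal,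
    Matrix.exp_diagonal, Pi.exp_def, ← smul_one_eq_diagonal, smul_one_mul]

end Exp

section Block
variable {R : Type*} [CommRing R] {ι κ : Type*} [Fintype ι] [Fintype κ]

theorem Matrix.sum_mulVec_eq_zero_of_isSymm {M : Matrix ι ι R} (hM : M.IsSymm) {μ : R}
    (hμ : M *ᵥ (fun _ => 1) = μ • fun _ => 1) {z : ι → R} (hz : ∑ i, z i = 0) :
    ∑ i, (M *ᵥ z) i = 0 := by
  rw [← one_dotProduct, dotProduct_mulVec, ← hM.eq, vecMul_transpose,
    show M *ᵥ 1 = μ • 1 from hμ, smul_dotProduct, one_dotProduct, hz, smul_zero]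

theorem Matrix.fromBlocks_mulVec_sumElim_zero (A : Matrix ι ι R) {B : Matrix ι κ R} {w : κ → R}
    (hB : ∀ i j, B i j = w j) (D : Matrix κ κ R) {z : ι → R} (hz : ∑ i, z i = 0) :
    fromBlocks A B Bᵀ D *ᵥ Sum.elim z 0 = Sum.elim (A *ᵥ z) 0 := by
  have hBz : Bᵀ *ᵥ z = 0 := by
    ext j
    simp only [mulVec, dotProduct, transpose_apply, hB, ← Finset.mul_sum, hz, mul_zero,
      Pi.zero_apply]
  rw [fromBlocks_mulVec]
  simp [hBz]

end Block

section Transition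
variable {ι κ : Type*} [Fintype ι] [DecidableEq ι] [Fintype κ] [DecidableEq κ]

theorem U_smul_one_add (α : ℝ) (M : Matrix ι ι ℝ) (t : ℝ) :
    U (α • 1 + M) t = Complex.exp ((α * t : ℝ) * Complex.I) • U M t := by
  have hsplit : (Complex.I * t) • (α • 1 + M).map ((↑) : ℝ → ℂ) =
      ((α * t : ℝ) * Complex.I) • 1 + (Complex.I * t) • M.map ((↑) : ℝ → ℂ) := by
    ext i j
    by_cases hij : i = j
    · simp [hij]
      ring
    · simp [one_apply, hij]
  rw [U, hsplit, exp_smul_one_add, Complex.exp_eq_exp_ℂ, U]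

theorem U_fromBlocks_mulVec_sumElim_zero {K : Matrix ι ι ℝ} (hK : K.IsSymm) {μ : ℝ}
    (hμ : K *ᵥ (fun _ => 1) = μ • fun _ => 1) {w : κ → ℝ} {B : Matrix ι κ ℝ}
    (hB : ∀ i j, B i j = w j) (D : Matrix κ κ ℝ) (t : ℝ) {z : ι → ℂ} (hz : ∑ i, z i = 0) :
    U (fromBlocks K B Bᵀ D) t *ᵥ Sum.elim z 0 = Sum.elim (U K t *ᵥ z) 0 := by
  set Kc := K.map ((↑) : ℝ → ℂ)
  have hKcs : Kc.IsSymm := hK.map _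
  have hKc : Kc *ᵥ (fun _ => 1) = (μ : ℂ) • fun _ => 1 := by
    ext i
    have h := RingHom.map_mulVec Complex.ofRealHom K (fun _ => 1) i
    rw [hμ] at h
    exact h.symm.trans (by simp)
  have hJ : ∀ v : ι → ℂ, fromRows 1 (0 : Matrix κ ι ℂ) *ᵥ v = Sum.elim v 0 :=
    fun v => by rw [fromRows_mulVec, one_mulVec, zero_mulVec]
  have hS : ∀ v ∈ {v : ι → ℂ | ∑ i, v i = 0}, ((Complex.I * t) • Kc) *ᵥ v ∈
      {v : ι → ℂ | ∑ i, v i = 0} := fun v hv => by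
    simp only [Set.mem_ofPred_eq, smul_mulVec, Pi.smul_apply, smul_eq_mul, ← Finset.mul_sum,
      sum_mulVec_eq_zero_of_isSymm hKcs hKc hv, mul_zero]
  have hNJ : ∀ v ∈ {v : ι → ℂ | ∑ i, v i = 0},
      ((Complex.I * t) • (fromBlocks K B Bᵀ D).map ((↑) : ℝ → ℂ)) *ᵥ (fromRows 1 0 *ᵥ v) =
        fromRows 1 0 *ᵥ (((Complex.I * t) • Kc) *ᵥ v) := fun v hv => by
    rw [smul_mulVec, smul_mulVec, mulVec_smul, hJ, hJ, fromBlocks_map, transpose_map,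
      fromBlocks_mulVec_sumElim_zero Kc (w := fun j => (w j : ℂ)) (fun i j => by simp [hB]) _ hv]
  rw [← hJ, U, U, exp_mulVec_mulVec_of_mulVec_mulVec _ _ _ hS hNJ hz, hJ]

end Transition

theorem stmt3_general (c m : ℕ)
    (M : Matrix (Fin c) (Fin c) ℝ) (hM : M.IsSymm)
    (μ α : ℝ) (hμ : M *ᵥ (fun _ => (1 : ℝ)) = μ • fun _ => (1 : ℝ))
    (w : Fin m → ℝ)
    (B : Matrix (Fin c) (Fin m) ℝ) (hB : ∀ i j, B i j = w j)
    (D : Matrix (Fin m) (Fin m) ℝ)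
    (N : Matrix (Fin c ⊕ Fin m) (Fin c ⊕ Fin m) ℝ)
    (hN : N = Matrix.fromBlocks (α • (1 : Matrix (Fin c) (Fin c) ℝ) + M) B Bᵀ D)
    (x y : Fin c → ℝ) (hx : ∑ i, x i = 0) :
    (∃ γ : ℂ, ‖γ‖ = 1 ∧ ∃ t : ℕ → ℝ,
        Filter.Tendsto (fun k => U M (t k) *ᵥ fun i => (x i : ℂ))
          Filter.atTop (nhds (γ • fun i => (y i : ℂ)))) ↔
      (∃ γ : ℂ, ‖γ‖ = 1 ∧ ∃ t : ℕ → ℝ,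
        Filter.Tendsto (fun k => U N (t k) *ᵥ Sum.elim (fun i => (x i : ℂ)) 0)
          Filter.atTop (nhds (γ • Sum.elim (fun i => (y i : ℂ)) 0))) := by
  set x' : Fin c → ℂ := fun i => x i
  set y' : Fin c → ℂ := fun i => y i
  let J : (Fin c → ℂ) →ₗ[ℂ] (Fin c ⊕ Fin m → ℂ) := mulVecLin (fromRows 1 0)
  have hJ : ∀ v, J v = Sum.elim v 0 := fun v => by simp [J]
  have hJ_inducing : IsInducing J := by
    rw [show ⇑J = fun v => Sum.elim v (0 : Fin m → ℂ) from funext hJ]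
    exact isEmbedding_sumElim_zero.isInducing
  have hx' : ∑ i, x' i = 0 := by simp only [x', ← Complex.ofReal_sum, hx, Complex.ofReal_zero]
  have hrow : (α • 1 + M) *ᵥ (fun _ => (1 : ℝ)) = (α + μ) • fun _ => (1 : ℝ) := by
    rw [add_mulVec, smul_mulVec, one_mulVec, hμ, add_smul]
  have hUN : ∀ s, U N s *ᵥ Sum.elim x' 0 =
      Complex.exp ((α * s : ℝ) * Complex.I) • J (U M s *ᵥ x') := fun s => by
    rw [hN, U_fromBlocks_mulVec_sumElim_zero ((isSymm_one.smul α).add hM) hrow hB D s hx',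
      U_smul_one_add, smul_mulVec, ← hJ, map_smul]
  change PrettyGoodTransfer (fun s => U M s *ᵥ x') y' ↔
    PrettyGoodTransfer (fun s => U N s *ᵥ Sum.elim x' 0) (Sum.elim y' 0)
  rw [funext hUN, ← hJ, PrettyGoodTransfer.phase_smul_iff
    fun s => Complex.norm_exp_ofReal_mul_I _, PrettyGoodTransfer.map_iff J hJ_inducing]

/-- For `x, y ∈ ℝ^c` with `𝟙ᵀx = 𝟙ᵀy = 0`, pretty good state transfer
occurs between `x` and `y` under `M` iff it occurs between `(x,0)` and `(y,0)`
under `N`. -/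
theorem stmt3 (c m : ℕ) (hc : 1 ≤ c)
    (M : Matrix (Fin c) (Fin c) ℝ) (hM : M.IsSymm)
    (μ α : ℝ) (hμ : M *ᵥ (fun _ => (1 : ℝ)) = μ • fun _ => (1 : ℝ))
    (w : Fin m → ℝ)
    (B : Matrix (Fin c) (Fin m) ℝ) (hB : ∀ i j, B i j = w j)
    (D : Matrix (Fin m) (Fin m) ℝ) (hD : D.IsSymm)
    (N : Matrix (Fin c ⊕ Fin m) (Fin c ⊕ Fin m) ℝ)
    (hN : N = Matrix.fromBlocks (α • (1 : Matrix (Fin c) (Fin c) ℝ) + M) B Bᵀ D)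
    (x y : Fin c → ℝ) (hx : ∑ i, x i = 0) (hy : ∑ i, y i = 0) :
    (∃ γ : ℂ, ‖γ‖ = 1 ∧ ∃ t : ℕ → ℝ,
        Filter.Tendsto (fun k => U M (t k) *ᵥ fun i => (x i : ℂ))
          Filter.atTop (nhds (γ • fun i => (y i : ℂ)))) ↔
      (∃ γ : ℂ, ‖γ‖ = 1 ∧ ∃ t : ℕ → ℝ,
        Filter.Tendsto (fun k => U N (t k) *ᵥ Sum.elim (fun i => (x i : ℂ)) 0)
          Filter.atTop (nhds (γ • Sum.elim (fun i => (y i : ℂ)) 0))) :=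
  stmt3_general c m M hM μ α hμ w B hB D N hN x y hx
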